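/- arXiv:2204.10474 — 3 statements merged into one kernel-verified Lean document; each statement's English description precedes it below -/
import Mathlib

section
/- Let n ≥ 1 and r ≥ 1 be integers and let I_1, …, I_r be pairwise disjoint subsets of ℤ^n. Let S be a nonempty finite subset of I_1 ∪ ⋯ ∪ I_r. Suppose that for each i ∈ {1,…,r} there exists m^i ∈ ℤ^n such that ⟨m^i, v⟩ = −1 for every v ∈ S ∩ I_i and ⟨m^i, v⟩ = 0 for every v ∈ S \ I_i. Suppose ν ∈ ℤ^n can be written as ν = Σ_{v∈S} c_v v with real coefficients c_v > 0 for all v ∈ S and Σ_{v∈S} c_v = 1. Then there exists i ∈ {1,…,r} such that S ⊆ I_i. -/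
/-- combinatorial core of the paper's Lemma in Section 3.
If `S ⊆ I_1 ∪ ⋯ ∪ I_r` (the `I i` pairwise disjoint subsets of `ℤ^n`), each `I i`
admits Cartier data `m^i` taking value `-1` on `S ∩ I_i` and `0` on `S \ I_i`, and a
lattice point `ν` is a strictly positive convex combination of the points of `S`,
then `S` is contained in a single `I i`. -/
theorem stmt0 (n r : ℕ) (hn : 1 ≤ n) (hr : 1 ≤ r)
    (I : Fin r → Set (Fin n → ℤ))
    (hIdisj : ∀ i j : Fin r, i ≠ j → Disjoint (I i) (I j))
    (S : Finset (Fin n → ℤ)) (hSne : S.Nonempty)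
    (hSsub : ∀ v ∈ S, ∃ i : Fin r, v ∈ I i)
    (hm : ∀ i : Fin r, ∃ m : Fin n → ℤ,
      ∀ v ∈ S, (v ∈ I i → ∑ k, m k * v k = -1) ∧ (v ∉ I i → ∑ k, m k * v k = 0))
    (ν : Fin n → ℤ) (c : (Fin n → ℤ) → ℝ)
    (hc : ∀ v ∈ S, 0 < c v) (hcsum : ∑ v ∈ S, c v = 1)
    (hν : (fun k => (ν k : ℝ)) = ∑ v ∈ S, c v • (fun k => (v k : ℝ))) :
    ∃ i : Fin r, (S : Set (Fin n → ℤ)) ⊆ I i := by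
  classical
  obtain ⟨v0, hv0⟩ := hSne
  obtain ⟨i, hi⟩ := hSsub v0 hv0
  obtain ⟨m, hm'⟩ := hm i
  refine ⟨i, ?_⟩
  set T := S.filter (fun v => v ∈ I i) with hTdef
  have hTsub : T ⊆ S := Finset.filter_subset _ _
  -- coordinates of ν
  have hνk : ∀ k, (ν k : ℝ) = ∑ v ∈ S, c v * v k := by
    intro k
    have := congrFun hν k
    simpa using this
  -- pairing computation
  have key : ((∑ k, m k * ν k : ℤ) : ℝ) = -(∑ v ∈ T, c v) := by
    push_cast
    calc ∑ k, (m k : ℝ) * ν k = ∑ k, (m k : ℝ) * ∑ v ∈ S, c v * v k := by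
          simp_rw [hνk]
      _ = ∑ v ∈ S, c v * ∑ k, (m k : ℝ) * v k := by
          simp_rw [Finset.mul_sum]
          rw [Finset.sum_comm]
          congr 1; ext v; congr 1; ext k; ring
      _ = ∑ v ∈ S, c v * (if v ∈ I i then (-1 : ℝ) else 0) := by
          refine Finset.sum_congr rfl fun v hv => ?_
          congr 1
          by_cases h : v ∈ I i
          · have := (hm' v hv).1 h
            have : ((∑ k, m k * v k : ℤ) : ℝ) = -1 := by exact_mod_cast this
            push_cast at this
            simp [h, this]
          · have := (hm' v hv).2 h
            have : ((∑ k, m k * v k : ℤ) : ℝ) = 0 := by exact_mod_cast this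
            push_cast at this
            simp [h, this]
      _ = -(∑ v ∈ T, c v) := by
          rw [hTdef, Finset.sum_filter]
          rw [← Finset.sum_neg_distrib]
          refine Finset.sum_congr rfl fun v hv => ?_
          by_cases h : v ∈ I i <;> simp [h]
  set t : ℝ := ∑ v ∈ T, c v with htdef
  have hv0T : v0 ∈ T := Finset.mem_filter.2 ⟨hv0, hi⟩
  have ht0 : 0 < t := Finset.sum_pos (fun v hv => hc v (hTsub hv)) ⟨v0, hv0T⟩
  have ht1 : t ≤ 1 := by
    rw [← hcsum]
    exact Finset.sum_le_sum_of_subset_of_nonneg hTsub (fun v hv _ => (hc v hv).le)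
  have hz : (∑ k, m k * ν k : ℤ) = -1 := by
    have h1 : ((∑ k, m k * ν k : ℤ) : ℝ) < 0 := by rw [key]; linarith
    have h2 : (-1 : ℝ) ≤ ((∑ k, m k * ν k : ℤ) : ℝ) := by rw [key]; linarith
    have h1' : (∑ k, m k * ν k : ℤ) < 0 := by exact_mod_cast h1
    have h2' : (-1 : ℤ) ≤ (∑ k, m k * ν k : ℤ) := by exact_mod_cast h2
    omega
  have ht : t = 1 := by
    have := key
    rw [hz] at this
    push_cast at this
    linarith
  -- the complement has sum zero, hence is empty
  have hcompl : ∑ v ∈ S \ T, c v = 0 := by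
    have := Finset.sum_sdiff hTsub (f := c)
    rw [hcsum, ← htdef] at this
    linarith
  have hTS : S \ T = ∅ := by
    by_contra h
    obtain ⟨w, hw⟩ := Finset.nonempty_of_ne_empty h
    have hpos : 0 < ∑ v ∈ S \ T, c v :=
      Finset.sum_pos (fun v hv => hc v (Finset.mem_sdiff.1 hv).1) ⟨w, hw⟩
    linarith
  intro v hv
  have hvS : v ∈ S := hv
  have : v ∈ T := by
    by_contra h
    have : v ∈ S \ T := Finset.mem_sdiff.2 ⟨hvS, h⟩
    rw [hTS] at this
    exact absurd this (Finset.notMem_empty v)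
  exact (Finset.mem_filter.1 this).2
end

section
/- Under the stated polytope hypotheses, let F be a proper face of P and let ν ∈ ℤ^n be a lattice point lying in the relative interior of F. Then there exists i ∈ {1,…,r} such that every vertex of F belongs to I_i. -/
open Module Set Function Filter Topology

/-!
Put `F` inside a facet `G` of `P`. On `G` the Cartier functionals `⟨m^i_G, ·⟩` take values in
`[-1, 0]` and sum to `-1`, because they do so at the vertices of `G`. At the lattice point `ν`
their values are integers, so one of them, say the `i`-th, equals `-1` at `ν`. A linear functional
that is minimal at a relative interior point of `F` is constant on `F`, so the `i`-th functional is
`-1` at every vertex of `F`, and these vertices lie in `I i`.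

A facet containing `F` is found by rotating a supporting hyperplane of `F` about the affine span of
its face until it meets a further vertex of `P`; each rotation raises the dimension of the face.
-/

def IsLatticePoint {n : ℕ} (x : Fin n → ℝ) : Prop := ∀ k, ∃ z : ℤ, x k = (z : ℝ)

lemma exists_eq_neg_one_of_sum_eq_neg_one {ι : Type*} [Fintype ι] {x : ι → ℝ}
    (hint : ∀ i, ∃ z : ℤ, x i = z) (hbound : ∀ i, x i ∈ Icc (-1) 0)
    (hsum : ∑ i, x i = -1) : ∃ i, x i = -1 := by
  obtain ⟨i, -, hi⟩ := Finset.exists_ne_zero_of_sum_ne_zero (by rw [hsum]; norm_num)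
  obtain ⟨z, hz⟩ := hint i
  obtain ⟨hlo, hhi⟩ := hbound i
  rw [hz] at hi hlo hhi
  have hz₀ : z ≠ 0 := by exact_mod_cast hi
  have hz₁ : -1 ≤ z := by exact_mod_cast hlo
  have hz₂ : z ≤ 0 := by exact_mod_cast hhi
  exact ⟨i, by rw [hz, show z = -1 by omega]; norm_num⟩

section Polytope

variable {E : Type*} [NormedAddCommGroup E] [NormedSpace ℝ E]

lemma exists_add_smul_sub_mem_of_mem_intrinsicInterior {F : Set E} {ν v : E}
    (hν : ν ∈ intrinsicInterior ℝ F) (hv : v ∈ F) :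
    ∃ ε : ℝ, 0 < ε ∧ ν + ε • (ν - v) ∈ F := by
  obtain ⟨y, hy, rfl⟩ := hν
  let line : ℝ → affineSpan ℝ F := fun t =>
    ⟨AffineMap.lineMap v y t, AffineMap.lineMap_mem t (subset_affineSpan ℝ F hv) y.2⟩
  have hline : Continuous line := AffineMap.lineMap_continuous.subtype_mk _
  have hline_one : line 1 = y := Subtype.ext (AffineMap.lineMap_apply_one v (y : E))
  have hnear : ∀ᶠ t in 𝓝[>] 1, line t ∈ interior ((↑) ⁻¹' F) :=
    nhdsWithin_le_nhds <| hline.continuousAt.preimage_mem_nhds <|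
      isOpen_interior.mem_nhds (hline_one ▸ hy)
  obtain ⟨t, ht, ht1⟩ := (hnear.and self_mem_nhdsWithin).exists
  refine ⟨t - 1, sub_pos.2 ht1, ?_⟩
  have hF : (line t : E) ∈ F :=
    interior_subset (s := ((↑) : affineSpan ℝ F → E) ⁻¹' F) ht
  convert hF using 1
  simp only [line, AffineMap.lineMap_apply, vsub_eq_sub, vadd_eq_add]
  module

lemma Module.Dual.eq_of_forall_le_of_mem_intrinsicInterior {F : Set E} {f : Dual ℝ E}
    {ν x : E} (hν : ν ∈ intrinsicInterior ℝ F) (hmin : ∀ y ∈ F, f ν ≤ f y)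
    (hx : x ∈ F) : f x = f ν := by
  obtain ⟨ε, hε, hmem⟩ := exists_add_smul_sub_mem_of_mem_intrinsicInterior hν hx
  have := hmin _ hmem
  simp only [map_add, map_smul, map_sub, smul_eq_mul] at this
  nlinarith [hmin x hx]

lemma IsCompact.subset_of_extremePoints_subset {K S : Set E} (hK : IsCompact K)
    (hKc : Convex ℝ K) (hS : Convex ℝ S) (hSc : IsClosed S) (h : K.extremePoints ℝ ⊆ S) :
    K ⊆ S := by
  rw [← closure_convexHull_extremePoints hK hKc]
  exact closure_minimal (convexHull_min h hS) hSc

lemma vectorSpan_le_ker_of_forall_eq {G : Set E} {u : Dual ℝ E} {c : ℝ}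
    (h : ∀ x ∈ G, u x = c) : vectorSpan ℝ G ≤ LinearMap.ker u := by
  rw [vectorSpan_def, Submodule.span_le]
  rintro _ ⟨x, hx, y, hy, rfl⟩
  simp [h x hx, h y hy]

lemma exists_apply_ne_of_affineSpan_eq_top {A : Set E} (hA : affineSpan ℝ A = ⊤)
    {μ : Dual ℝ E} (hμ : μ ≠ 0) (g : E) : ∃ a ∈ A, μ a ≠ μ g := by
  by_contra! h
  refine hμ (LinearMap.ker_eq_top.1 (top_le_iff.1 ?_))
  rw [← AffineSubspace.vectorSpan_eq_top_of_affineSpan_eq_top ℝ E E hA]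
  exact vectorSpan_le_ker_of_forall_eq h

variable [FiniteDimensional ℝ E]

lemma isExposed_setOf_eq {P : Set E} {u : Dual ℝ E} {c : ℝ} (hle : ∀ x ∈ P, u x ≤ c) :
    IsExposed ℝ P {x ∈ P | u x = c} := by
  rintro ⟨g, hgP, hgc⟩
  refine ⟨LinearMap.toContinuousLinearMap u, ?_⟩
  ext x
  simp only [mem_ofPred_eq, LinearMap.coe_toContinuousLinearMap']
  refine and_congr_right fun hxP => ⟨fun hx y hy => hx ▸ hle y hy, fun hx => ?_⟩
  exact le_antisymm (hle x hxP) (hgc ▸ hx g hgP)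

lemma finrank_vectorSpan_le_of_forall_eq {G : Set E} {u : Dual ℝ E} {c : ℝ} (hu : u ≠ 0)
    (h : ∀ x ∈ G, u x = c) : finrank ℝ (vectorSpan ℝ G) ≤ finrank ℝ E - 1 := by
  have := Submodule.finrank_mono (vectorSpan_le_ker_of_forall_eq h)
  have := u.finrank_ker_add_one_of_ne_zero hu
  omega

lemma exists_mem_dualAnnihilator_notMem_span_singleton {W : Submodule ℝ E} (u : Dual ℝ E)
    (hW : finrank ℝ W + 1 < finrank ℝ E) : ∃ μ ∈ W.dualAnnihilator, μ ∉ ℝ ∙ u := by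
  by_contra! h
  have := Submodule.finrank_mono (show W.dualAnnihilator ≤ ℝ ∙ u from h)
  have := Subspace.finrank_add_finrank_dualAnnihilator_eq W
  have := finrank_span_le_card (R := ℝ) ({u} : Set (Dual ℝ E))
  simp only [toFinset_singleton, Finset.card_singleton] at this
  omega

lemma exists_supporting_finrank_vectorSpan_lt {A : Finset E} {P : Set E}
    (hP : P = convexHull ℝ ↑A) {u μ : Dual ℝ E} {c : ℝ} (hle : ∀ x ∈ P, u x ≤ c)
    (hμ : μ ∈ (vectorSpan ℝ {x ∈ P | u x = c}).dualAnnihilator) (hμu : μ ∉ ℝ ∙ u)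
    {g a₀ : E} (hg : g ∈ {x ∈ P | u x = c}) (ha₀ : a₀ ∈ A) (hga₀ : μ a₀ ≠ μ g) :
    ∃ (u' : Dual ℝ E) (c' : ℝ), u' ≠ 0 ∧ (∀ x ∈ P, u' x ≤ c') ∧
      {x ∈ P | u x = c} ⊆ {x ∈ P | u' x = c'} ∧
      finrank ℝ (vectorSpan ℝ {x ∈ P | u x = c}) <
        finrank ℝ (vectorSpan ℝ {x ∈ P | u' x = c'}) := by
  wlog hlt : μ g < μ a₀ generalizing μ
  · exact this (neg_mem hμ) (by rwa [Submodule.neg_mem_iff]) (by simpa using hga₀)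
      (by simpa using lt_of_le_of_ne (not_lt.1 hlt) hga₀)
  set G := {x ∈ P | u x = c}
  have hAP : ∀ a ∈ A, a ∈ P := fun a ha => hP ▸ subset_convexHull ℝ _ ha
  have hμG : ∀ x ∈ G, μ x = μ g := fun x hx => by
    have := (Submodule.mem_dualAnnihilator μ).1 hμ _ (vsub_mem_vectorSpan ℝ hx hg)
    rwa [vsub_eq_sub, map_sub, sub_eq_zero] at this
  set S := A.filter (fun a => μ g < μ a)
  have hSlt : ∀ a ∈ S, u a < c ∧ μ g < μ a := fun a ha => by
    obtain ⟨haA, hμa⟩ := Finset.mem_filter.1 ha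
    refine ⟨(hle a (hAP a haA)).lt_of_ne fun hua => ?_, hμa⟩
    exact hμa.ne' (hμG a ⟨hAP a haA, hua⟩)
  -- the tilted hyperplane `u + t • μ = c + t * μ g` still contains `G`, and first meets `A`
  -- at the minimiser `a'` of `τ`
  let τ : E → ℝ := fun a => (c - u a) / (μ a - μ g)
  obtain ⟨a', ha'S, hτ⟩ :=
    S.exists_min_image τ ⟨a₀, Finset.mem_filter.2 ⟨ha₀, hlt⟩⟩
  set t := τ a'
  obtain ⟨hua', hμa'⟩ := hSlt a' ha'S
  have ht : 0 < t := div_pos (sub_pos.2 hua') (sub_pos.2 hμa')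
  set G' := {x ∈ P | (u + t • μ) x = c + t * μ g}
  have hGG' : G ⊆ G' := fun x hx => ⟨hx.1, by simp [hx.2, hμG x hx]⟩
  have ha'G' : a' ∈ G' := by
    refine ⟨hAP a' (Finset.mem_of_mem_filter a' ha'S), ?_⟩
    simp only [LinearMap.add_apply, LinearMap.smul_apply, smul_eq_mul, t, τ]
    field_simp [(sub_pos.2 hμa').ne']
    ring
  refine ⟨u + t • μ, c + t * μ g, fun h => hμu ?_, ?_, hGG', ?_⟩
  · rw [Submodule.mem_span_singleton]
    refine ⟨-t⁻¹, ?_⟩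
    rw [add_eq_zero_iff_neg_eq] at h
    rw [neg_smul, ← smul_neg, h, smul_smul, inv_mul_cancel₀ ht.ne', one_smul]
  · suffices hA : ∀ a ∈ (A : Set E), (u + t • μ) a ≤ c + t * μ g by
      rw [hP]
      exact fun x hx => convexHull_min hA (convex_halfSpace_le (u + t • μ).isLinear _) hx
    intro a ha
    simp only [LinearMap.add_apply, LinearMap.smul_apply, smul_eq_mul]
    rcases le_or_gt (μ a) (μ g) with hμa | hμa
    · nlinarith [hle a (hAP a ha)]
    · have := hτ a (Finset.mem_filter.2 ⟨ha, hμa⟩)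
      rw [le_div_iff₀ (sub_pos.2 hμa)] at this
      linarith
  · refine Submodule.finrank_lt_finrank_of_lt ((vectorSpan_mono ℝ hGG').lt_of_ne fun h => ?_)
    have hmem : a' -ᵥ g ∈ vectorSpan ℝ G := h ▸ vsub_mem_vectorSpan ℝ ha'G' (hGG' hg)
    have := (Submodule.mem_dualAnnihilator μ).1 hμ _ hmem
    rw [vsub_eq_sub, map_sub, sub_eq_zero] at this
    exact hμa'.ne' this

lemma exists_supporting_finrank_vectorSpan_eq {A : Finset E} {P : Set E}
    (hP : P = convexHull ℝ ↑A) (hPint : (interior P).Nonempty) {u : Dual ℝ E} {c : ℝ}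
    (hu : u ≠ 0) (hle : ∀ x ∈ P, u x ≤ c) (hne : {x ∈ P | u x = c}.Nonempty) :
    ∃ (u' : Dual ℝ E) (c' : ℝ), (∀ x ∈ P, u' x ≤ c') ∧
      {x ∈ P | u x = c} ⊆ {x ∈ P | u' x = c'} ∧
      finrank ℝ (vectorSpan ℝ {x ∈ P | u' x = c'}) = finrank ℝ E - 1 := by
  induction h : finrank ℝ E - 1 - finrank ℝ (vectorSpan ℝ {x ∈ P | u x = c})
    using Nat.strong_induction_on generalizing u c with
  | _ k ih =>
  have hrk := finrank_vectorSpan_le_of_forall_eq (G := {x ∈ P | u x = c}) hu fun x hx => hx.2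
  obtain hrk | hrk := hrk.eq_or_lt
  · exact ⟨u, c, hle, subset_rfl, hrk⟩
  obtain ⟨g, hg⟩ := hne
  obtain ⟨μ, hμ, hμu⟩ := exists_mem_dualAnnihilator_notMem_span_singleton
    (W := vectorSpan ℝ {x ∈ P | u x = c}) u (by omega)
  have hμ0 : μ ≠ 0 := fun h => hμu (h ▸ zero_mem _)
  obtain ⟨a₀, ha₀, hga₀⟩ := exists_apply_ne_of_affineSpan_eq_top
    (affineSpan_eq_top_of_nonempty_interior (hP ▸ hPint)) hμ0 g
  obtain ⟨u', c', hu', hle', hGG', hrk'⟩ :=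
    exists_supporting_finrank_vectorSpan_lt hP hle hμ hμu hg ha₀ hga₀
  obtain ⟨u'', c'', hle'', hG'G'', hrk''⟩ := ih _ (by omega) hu' hle' ⟨g, hGG' hg⟩ rfl
  exact ⟨u'', c'', hle'', hGG'.trans hG'G'', hrk''⟩

lemma IsExposed.exists_facet_superset {A : Finset E} {P : Set E}
    (hP : P = convexHull ℝ ↑A) (hPint : (interior P).Nonempty) {F : Set E}
    (hF : IsExposed ℝ P F) (hFP : F ≠ P) (hFne : F.Nonempty) :
    ∃ G, IsExposed ℝ P G ∧ finrank ℝ (vectorSpan ℝ G) = finrank ℝ E - 1 ∧ F ⊆ G := by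
  obtain ⟨l, rfl⟩ := hF hFne
  obtain ⟨p, hpP, hpmax⟩ := hFne
  have hl : (l : Dual ℝ E) ≠ 0 := fun h => hFP <| by
    ext x
    simp [show ∀ y, l y = 0 from LinearMap.congr_fun h]
  obtain ⟨u, c, hle, hFG, hG⟩ := exists_supporting_finrank_vectorSpan_eq hP hPint hl hpmax
    ⟨p, hpP, rfl⟩
  refine ⟨_, isExposed_setOf_eq hle, hG, fun x ⟨hxP, hx⟩ => hFG ⟨hxP, ?_⟩⟩
  exact le_antisymm (hpmax x hxP) (hx p hpP)

/-- The functionals `⟨m^i_G, ·⟩` of a nef-partition on `G`. -/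
def IsCartierData {ι : Type*} (G : Set E) (I : ι → Set E) (f : ι → Dual ℝ E) : Prop :=
  ∀ i, ∀ v ∈ G.extremePoints ℝ, f i v = (I i).indicator (fun _ => -1) v

namespace IsCartierData

variable {ι : Type*} {G : Set E} {I : ι → Set E} {f : ι → Dual ℝ E}

lemma apply_mem_Icc (hf : IsCartierData G I f) (hG : IsCompact G) (hGc : Convex ℝ G) (i : ι)
    {x : E} (hx : x ∈ G) : f i x ∈ Icc (-1) 0 := by
  refine hG.subset_of_extremePoints_subset hGc ((convex_Icc _ _).linear_preimage (f i))
    (isClosed_Icc.preimage (f i).continuous_of_finiteDimensional) (fun v hv => ?_) hx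
  by_cases hvI : v ∈ I i <;> simp [hf i v hv, hvI]

lemma sum_apply_eq_neg_one [Fintype ι] (hf : IsCartierData G I f) (hG : IsCompact G)
    (hGc : Convex ℝ G) (hdisj : Pairwise (Disjoint on I))
    (hcover : G.extremePoints ℝ ⊆ ⋃ i, I i)
    {x : E} (hx : x ∈ G) : ∑ i, f i x = -1 := by
  suffices x ∈ ⇑(∑ i, f i) ⁻¹' {-1} by simpa using this
  refine hG.subset_of_extremePoints_subset hGc ((convex_singleton _).linear_preimage _)
    (isClosed_singleton.preimage (∑ i, f i).continuous_of_finiteDimensional) (fun v hv => ?_) hx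
  obtain ⟨j, hj⟩ := mem_iUnion.1 (hcover hv)
  have hnot : ∀ i ≠ j, v ∉ I i := fun i hi hvi => (hdisj hi).ne_of_mem hvi hj rfl
  rw [mem_preimage, LinearMap.sum_apply, mem_singleton_iff,
    Finset.sum_eq_single j (fun i _ hi => by simp [hf i v hv, hnot i hi]) (by simp)]
  simp [hf j v hv, hj]

lemma exists_extremePoints_subset [Fintype ι] (hf : IsCartierData G I f) (hG : IsCompact G)
    (hGc : Convex ℝ G) (hdisj : Pairwise (Disjoint on I))
    (hcover : G.extremePoints ℝ ⊆ ⋃ i, I i)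
    {F : Set E} (hFG : F ⊆ G) (hext : F.extremePoints ℝ ⊆ G.extremePoints ℝ) {ν : E}
    (hν : ν ∈ intrinsicInterior ℝ F) (hint : ∀ i, ∃ z : ℤ, f i ν = z) :
    ∃ i, F.extremePoints ℝ ⊆ I i := by
  have hνG : ν ∈ G := hFG (intrinsicInterior_subset hν)
  obtain ⟨i, hi⟩ := exists_eq_neg_one_of_sum_eq_neg_one hint
    (fun i => hf.apply_mem_Icc hG hGc i hνG) (hf.sum_apply_eq_neg_one hG hGc hdisj hcover hνG)
  have hmin : ∀ y ∈ F, f i ν ≤ f i y := fun y hy =>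
    hi ▸ (hf.apply_mem_Icc hG hGc i (hFG hy)).1
  refine ⟨i, fun v hv => ?_⟩
  have hv' := hf i v (hext hv)
  rw [Module.Dual.eq_of_forall_le_of_mem_intrinsicInterior hν hmin hv.1, hi] at hv'
  by_contra hvI
  simp [hvI] at hv'

end IsCartierData

end Polytope

theorem stmt1_general (n r : ℕ)
    (A : Finset (Fin n → ℝ))
    (P : Set (Fin n → ℝ)) (hPdef : P = convexHull ℝ (A : Set (Fin n → ℝ)))
    (h0 : (0 : Fin n → ℝ) ∈ interior P)
    (I : Fin r → Set (Fin n → ℝ))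
    (hIdisj : ∀ i j : Fin r, i ≠ j → Disjoint (I i) (I j))
    (hIunion : (⋃ i, I i) = Set.extremePoints ℝ P)
    -- (ii) Cartier data of the nef-partition on every facet
    (hcartier : ∀ F : Set (Fin n → ℝ), IsExposed ℝ P F →
      Module.finrank ℝ (vectorSpan ℝ F) = n - 1 → ∀ i : Fin r,
      ∃ m : Fin n → ℤ, ∀ v ∈ Set.extremePoints ℝ F,
        (v ∈ I i → ∑ k, (m k : ℝ) * v k = -1) ∧ (v ∉ I i → ∑ k, (m k : ℝ) * v k = 0))
    (F : Set (Fin n → ℝ)) (hF : IsExposed ℝ P F) (hFproper : F ≠ P)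
    (ν : Fin n → ℝ) (hνlat : IsLatticePoint ν) (hνF : ν ∈ intrinsicInterior ℝ F) :
    ∃ i : Fin r, Set.extremePoints ℝ F ⊆ I i := by
  obtain ⟨G, hG, hGrank, hFG⟩ :=
    hF.exists_facet_superset hPdef ⟨0, h0⟩ hFproper ⟨ν, intrinsicInterior_subset hνF⟩
  rw [Module.finrank_fin_fun] at hGrank
  choose M hM using hcartier G hG hGrank
  have hPcomp : IsCompact P := hPdef ▸ A.finite_toSet.isCompact_convexHull ℝ
  have hcart : IsCartierData G I fun i => dotProductEquiv ℝ (Fin n) fun k => (M i k : ℝ) := by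
    intro i v hv
    by_cases hvI : v ∈ I i
    · simpa [hvI, dotProduct] using (hM i v hv).1 hvI
    · simpa [hvI, dotProduct] using (hM i v hv).2 hvI
  refine hcart.exists_extremePoints_subset (hG.isCompact hPcomp)
    (hG.convex (hPdef ▸ convex_convexHull ℝ _)) hIdisj
    (hIunion ▸ hG.isExtreme.extremePoints_subset_extremePoints) hFG
    (hF.mono hG.subset hFG).isExtreme.extremePoints_subset_extremePoints hνF fun i => ?_
  choose z hz using hνlat
  exact ⟨∑ k, M i k * z k, by simp [dotProduct, hz]⟩

/-- if `P` is a reflexive polytope whose vertex set is partitioned by a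
nef-partition `I_1 ⊔ ⋯ ⊔ I_r` (with Cartier data on every facet), `F` is a proper
(exposed) face of `P` and `ν` is a lattice point in the relative interior of `F`,
then all the vertices of `F` lie in a single `I i`. -/
theorem stmt1 (n r : ℕ) (hn : 1 ≤ n) (hr : 1 ≤ r)
    (A : Finset (Fin n → ℝ))
    (P : Set (Fin n → ℝ)) (hPdef : P = convexHull ℝ (A : Set (Fin n → ℝ)))
    (h0 : (0 : Fin n → ℝ) ∈ interior P)
    (hvertLat : ∀ v ∈ Set.extremePoints ℝ P, IsLatticePoint v)
    (I : Fin r → Set (Fin n → ℝ))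
    (hIdisj : ∀ i j : Fin r, i ≠ j → Disjoint (I i) (I j))
    (hIunion : (⋃ i, I i) = Set.extremePoints ℝ P)
    -- (i) reflexivity: every facet lies on an integral hyperplane at level -1
    (hreflexive : ∀ F : Set (Fin n → ℝ), IsExposed ℝ P F →
      Module.finrank ℝ (vectorSpan ℝ F) = n - 1 →
      ∃ m : Fin n → ℤ, ∀ x ∈ F, ∑ k, (m k : ℝ) * x k = -1)
    -- (ii) Cartier data of the nef-partition on every facet
    (hcartier : ∀ F : Set (Fin n → ℝ), IsExposed ℝ P F →
      Module.finrank ℝ (vectorSpan ℝ F) = n - 1 → ∀ i : Fin r,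
      ∃ m : Fin n → ℤ, ∀ v ∈ Set.extremePoints ℝ F,
        (v ∈ I i → ∑ k, (m k : ℝ) * v k = -1) ∧ (v ∉ I i → ∑ k, (m k : ℝ) * v k = 0))
    (F : Set (Fin n → ℝ)) (hF : IsExposed ℝ P F) (hFproper : F ≠ P)
    (ν : Fin n → ℝ) (hνlat : IsLatticePoint ν) (hνF : ν ∈ intrinsicInterior ℝ F) :
    ∃ i : Fin r, Set.extremePoints ℝ F ⊆ I i :=
  stmt1_general n r A P hPdef h0 I hIdisj hIunion hcartier F hF hFproper ν hνlat hνF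
end

section
/- Under the stated polytope hypotheses, and assuming additionally that 0 is the only point of ℤ^n in the interior of P, one has P ∩ ℤ^n = ⋃_{i=1}^r (conv(I_i ∪ {0}) ∩ ℤ^n). In other words, every lattice point of P belongs to ∇_i := conv(I_i ∪ {0}) for some i ∈ {1,…,r}, and conversely each ∇_i is contained in P. -/
open Function Module Set

theorem Finset.exists_add_mul_le_and_eq {α : Type*} (s : Finset α) {f g : α → ℝ} {c : ℝ}
    (hf : ∀ a ∈ s, f a ≤ c) (hg : ∃ a ∈ s, 0 < g a) :
    ∃ t : ℝ, (∀ a ∈ s, f a + t * g a ≤ c) ∧ ∃ a ∈ s, 0 < g a ∧ f a + t * g a = c := by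
  classical
  obtain ⟨a₀, ha₀, hmin⟩ := (s.filter (0 < g ·)).exists_min_image (fun a => (c - f a) / g a)
    (by simpa [Finset.Nonempty] using hg)
  obtain ⟨ha₀s, hga₀⟩ := Finset.mem_filter.1 ha₀
  refine ⟨(c - f a₀) / g a₀, fun a ha => ?_, a₀, ha₀s, hga₀, by field_simp; ring⟩
  rcases le_or_gt (g a) 0 with hga | hga
  · have : 0 ≤ (c - f a₀) / g a₀ := div_nonneg (by linarith [hf a₀ ha₀s]) hga₀.le
    nlinarith [hf a ha]
  · have := hmin a (Finset.mem_filter.2 ⟨ha, hga⟩)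
    rw [le_div_iff₀ hga] at this
    linarith

theorem sum_indicator_one_eq_one {ι α : Type*} [Fintype ι] {I : ι → Set α}
    (hI : Pairwise (Disjoint on I)) {v : α} (hv : v ∈ ⋃ i, I i) :
    ∑ i, (I i).indicator (1 : α → ℝ) v = 1 := by
  obtain ⟨i₀, hi₀⟩ := mem_iUnion.1 hv
  rw [Finset.sum_eq_single i₀
    (fun j _ hj => indicator_of_notMem ((hI hj).notMem_of_mem_right hi₀) _)
    (fun h => absurd (Finset.mem_univ i₀) h), indicator_of_mem hi₀, Pi.one_apply]

theorem IsLatticePoint.exists_int_sum_mul {n : ℕ} {x : Fin n → ℝ} (hx : IsLatticePoint x)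
    (m : Fin n → ℤ) : ∃ z : ℤ, ∑ k, (m k : ℝ) * x k = z := by
  choose y hy using hx
  exact ⟨∑ k, m k * y k, by push_cast; simp [hy]⟩

section Faces

variable {E : Type*} [AddCommGroup E] [Module ℝ E]

theorem mem_convexHull_setOf_eq_of_le {s : Set E} {f : Module.Dual ℝ E} {c : ℝ} {x : E}
    (hf : ∀ y ∈ s, f y ≤ c) (hx : x ∈ convexHull ℝ s) (hfx : c ≤ f x) :
    x ∈ convexHull ℝ {y ∈ s | f y = c} := by
  classical
  rw [convexHull_eq] at hx
  obtain ⟨ι, t, w, z, hw0, hw1, hz, rfl⟩ := hx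
  have hslack : ∀ i ∈ t, w i * (c - f (z i)) = 0 := by
    refine (Finset.sum_eq_zero_iff_of_nonneg fun i hi =>
      mul_nonneg (hw0 i hi) (by linarith [hf _ (hz i hi)])).1 (le_antisymm ?_ ?_)
    · rw [Finset.centerMass_eq_of_sum_1 _ _ hw1, map_sum] at hfx
      simp only [map_smul, smul_eq_mul] at hfx
      simp only [mul_sub, Finset.sum_sub_distrib, ← Finset.sum_mul, hw1]
      linarith
    · exact Finset.sum_nonneg fun i hi => mul_nonneg (hw0 i hi) (by linarith [hf _ (hz i hi)])
  rw [← Finset.centerMass_filter_ne_zero]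
  refine Finset.centerMass_mem_convexHull _ (fun i hi => hw0 i (Finset.mem_filter.1 hi).1)
    (by rw [Finset.sum_filter_ne_zero, hw1]; exact one_pos) fun i hi => ?_
  obtain ⟨hit, hwi⟩ := Finset.mem_filter.1 hi
  have := (mul_eq_zero.1 (hslack i hit)).resolve_left hwi
  exact ⟨hz i hit, by linarith⟩

theorem exists_mem_convexHull_setOf_eq_one {ι : Type*} [Fintype ι] {T : Set E}
    {φ : ι → Module.Dual ℝ E} {x : E} (hle : ∀ i, ∀ v ∈ T, φ i v ≤ 1)
    (hsum : ∀ v ∈ T, ∑ i, φ i v = 1) (hx : x ∈ convexHull ℝ T) (hint : ∀ i, ∃ z : ℤ, φ i x = z) :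
    ∃ i, x ∈ convexHull ℝ {v ∈ T | φ i v = 1} := by
  have hsumx : ∑ i, φ i x = 1 := by
    have := convexHull_min (t := {y | (∑ i, φ i) y = 1}) (fun v hv => by simpa using hsum v hv)
      (convex_hyperplane (∑ i, φ i).isLinear 1) hx
    simpa using this
  obtain ⟨i, hi⟩ : ∃ i, 0 < φ i x := by
    by_contra! h
    linarith [Finset.sum_nonpos fun i (_ : i ∈ Finset.univ) => h i]
  obtain ⟨z, hz⟩ := hint i
  rw [hz, Int.cast_pos] at hi
  exact ⟨i, mem_convexHull_setOf_eq_of_le (hle i) hx (by rw [hz]; exact_mod_cast hi)⟩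

end Faces

section Facets

variable {E : Type*} [AddCommGroup E] [Module ℝ E] [FiniteDimensional ℝ E]

theorem finrank_vectorSpan_setOf_eq_le {s : Set E} {f : Module.Dual ℝ E} {c : ℝ} (hf : f ≠ 0) :
    finrank ℝ (vectorSpan ℝ {y ∈ s | f y = c}) ≤ finrank ℝ E - 1 := by
  have hker : vectorSpan ℝ {y ∈ s | f y = c} ≤ LinearMap.ker f := by
    rw [vectorSpan_def, Submodule.span_le]
    rintro _ ⟨a, ha, b, hb, rfl⟩
    simp [ha.2, hb.2]
  have := Submodule.finrank_mono hker
  have := Module.Dual.finrank_ker_add_one_of_ne_zero hf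
  omega

theorem exists_vectorSpan_setOf_eq_one_lt {A : Finset E} (hA : Submodule.span ℝ (A : Set E) = ⊤)
    {f : Module.Dual ℝ E} {x : E} (hf : ∀ a ∈ A, f a ≤ 1) (hx : x ∈ convexHull ℝ (A : Set E))
    (hfx : f x = 1)
    (hdim : finrank ℝ (vectorSpan ℝ {y ∈ convexHull ℝ (A : Set E) | f y = 1}) + 1 < finrank ℝ E) :
    ∃ g : Module.Dual ℝ E, (∀ a ∈ A, g a ≤ 1) ∧ g x = 1 ∧
      vectorSpan ℝ {y ∈ convexHull ℝ (A : Set E) | f y = 1}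
        < vectorSpan ℝ {y ∈ convexHull ℝ (A : Set E) | g y = 1} := by
  set P := convexHull ℝ (A : Set E)
  set F := {y ∈ P | f y = 1}
  have hxF : x ∈ F := ⟨hx, hfx⟩
  have hW : finrank ℝ ↥((ℝ ∙ x) ⊔ vectorSpan ℝ F) < finrank ℝ E := by
    have := finrank_span_le_card (R := ℝ) ({x} : Set E)
    have := Submodule.finrank_add_le_finrank_add_finrank (ℝ ∙ x) (vectorSpan ℝ F)
    simp only [toFinset_singleton, Finset.card_singleton] at *
    omega
  obtain ⟨a, ha, haW⟩ : ∃ a ∈ A, a ∉ (ℝ ∙ x) ⊔ vectorSpan ℝ F := by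
    by_contra! h
    have hWtop : (ℝ ∙ x) ⊔ vectorSpan ℝ F = ⊤ := top_le_iff.1 (hA ▸ Submodule.span_le.2 h)
    rw [hWtop, finrank_top] at hW
    exact hW.false
  -- `ψ` vanishes on the linear span of `F` but not at `a`, so `f + t • ψ` still equals `1` on `F`
  obtain ⟨ψ, hψa, hWψ⟩ := Submodule.exists_le_ker_of_notMem haW
  wlog hψa_pos : 0 < ψ a generalizing ψ
  · exact this (-ψ) (by simpa using hψa) (by rwa [LinearMap.ker_neg])
      (by simpa using lt_of_le_of_ne (not_lt.1 hψa_pos) hψa)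
  have hψx : ψ x = 0 := hWψ (Submodule.mem_sup_left (Submodule.mem_span_singleton_self x))
  have hψF : ∀ y ∈ F, ψ y = 0 := fun y hy => by
    simpa [hψx] using hWψ (Submodule.mem_sup_right (vsub_mem_vectorSpan ℝ hy hxF))
  obtain ⟨t, ht, a₀, ha₀, hψa₀, ha₀t⟩ := A.exists_add_mul_le_and_eq hf ⟨a, ha, hψa_pos⟩
  set g := f + t • ψ
  have hFG : F ⊆ {y ∈ P | g y = 1} := fun y hy => ⟨hy.1, by simp [g, hy.2, hψF y hy]⟩
  refine ⟨g, fun b hb => by simpa [g] using ht b hb, (hFG hxF).2,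
    (vectorSpan_mono ℝ hFG).lt_of_ne fun hFG_eq => ?_⟩
  have ha₀F : a₀ -ᵥ x ∈ vectorSpan ℝ F := hFG_eq ▸
    vsub_mem_vectorSpan ℝ ⟨subset_convexHull ℝ _ ha₀, by simpa [g] using ha₀t⟩ (hFG hxF)
  have := hWψ (Submodule.mem_sup_right ha₀F)
  simp [hψx, hψa₀.ne'] at this

end Facets

section Polytopes

variable {E : Type*} [NormedAddCommGroup E] [NormedSpace ℝ E]

theorem exists_le_one_eq_one_of_notMem_interior {P : Set E} (hP : Convex ℝ P)
    (h0 : (0 : E) ∈ interior P) {x : E} (hx : x ∉ interior P) :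
    ∃ f : StrongDual ℝ E, (∀ y ∈ P, f y ≤ 1) ∧ f x = 1 := by
  obtain ⟨g, hg⟩ := geometric_hahn_banach_open_point hP.interior isOpen_interior hx
  have hgx : 0 < g x := by simpa using hg 0 h0
  have hgP : ∀ y ∈ P, g y ≤ g x := fun y hy =>
    closure_minimal (fun z hz => (hg z hz).le) (isClosed_le g.continuous continuous_const)
      ((hP.closure_interior_eq_closure_of_nonempty_interior ⟨0, h0⟩).symm ▸ subset_closure hy)
  refine ⟨(g x)⁻¹ • g, fun y hy => ?_, by simp [hgx.ne']⟩
  simpa [inv_mul_le_iff₀ hgx] using hgP y hy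

theorem isExposed_setOf_eq_of_le {P : Set E} {f : StrongDual ℝ E} {c : ℝ}
    (hf : ∀ y ∈ P, f y ≤ c) : IsExposed ℝ P {y ∈ P | f y = c} := by
  rintro ⟨x, hxP, rfl⟩
  exact ⟨f, Set.ext fun y => ⟨fun hy => ⟨hy.1, fun z hz => hy.2 ▸ hf z hz⟩,
    fun hy => ⟨hy.1, le_antisymm (hf y hy.1) (hy.2 x hxP)⟩⟩⟩

theorem IsExposed.convexHull_extremePoints_eq {A : Finset E} {F : Set E}
    (hF : IsExposed ℝ (convexHull ℝ (A : Set E)) F) : convexHull ℝ (F.extremePoints ℝ) = F := by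
  have hfin : (F.extremePoints ℝ).Finite := A.finite_toSet.subset
    (hF.isExtreme.extremePoints_subset_extremePoints.trans extremePoints_convexHull_subset)
  rw [← (Set.Finite.isClosed_convexHull ℝ hfin).closure_eq]
  exact closure_convexHull_extremePoints
    (hF.isCompact (A.finite_toSet.isCompact_convexHull (𝕜 := ℝ))) (hF.convex (convex_convexHull ℝ _))

variable [FiniteDimensional ℝ E]

theorem exists_facet_of_notMem_interior {A : Finset E}
    (h0 : (0 : E) ∈ interior (convexHull ℝ (A : Set E))) {x : E}
    (hx : x ∈ convexHull ℝ (A : Set E)) (hxi : x ∉ interior (convexHull ℝ (A : Set E))) :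
    ∃ F, IsExposed ℝ (convexHull ℝ (A : Set E)) F ∧ x ∈ F ∧
      finrank ℝ (vectorSpan ℝ F) = finrank ℝ E - 1 := by
  have hA : Submodule.span ℝ (A : Set E) = ⊤ := Submodule.eq_top_of_nonempty_interior' _
    ⟨0, interior_mono (convexHull_min Submodule.subset_span (Submodule.convex _)) h0⟩
  set S := {f : Module.Dual ℝ E | (∀ a ∈ A, f a ≤ 1) ∧ f x = 1}
  set d := fun f : Module.Dual ℝ E =>
    finrank ℝ (vectorSpan ℝ {y ∈ convexHull ℝ (A : Set E) | f y = 1})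
  have hd : ∀ f ∈ S, d f ≤ finrank ℝ E - 1 := fun f hf =>
    finrank_vectorSpan_setOf_eq_le (by rintro rfl; simpa using hf.2)
  obtain ⟨f, hfS, hfmax⟩ : ∃ f ∈ S, ∀ g ∈ S, d g ≤ d f := by
    obtain ⟨g, hgP, hgx⟩ := exists_le_one_eq_one_of_notMem_interior (convex_convexHull ℝ _) h0 hxi
    have hne : (d '' S).Nonempty :=
      ⟨_, g.toLinearMap, ⟨fun a ha => hgP a (subset_convexHull ℝ _ ha), hgx⟩, rfl⟩
    have hbdd : BddAbove (d '' S) := ⟨finrank ℝ E - 1, by rintro _ ⟨f, hf, rfl⟩; exact hd f hf⟩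
    obtain ⟨f, hf, hfd⟩ := Nat.sSup_mem hne hbdd
    exact ⟨f, hf, fun g hg => hfd ▸ le_csSup hbdd ⟨g, hg, rfl⟩⟩
  have hdim : d f = finrank ℝ E - 1 := by
    refine le_antisymm (hd f hfS) (not_lt.1 fun hlt => ?_)
    obtain ⟨g, hgA, hgx, hlt'⟩ := exists_vectorSpan_setOf_eq_one_lt hA hfS.1 hx hfS.2
      (by dsimp only [d] at hlt; omega)
    exact (hfmax g ⟨hgA, hgx⟩).not_gt (Submodule.finrank_lt_finrank_of_lt hlt')
  have hfP : ∀ y ∈ convexHull ℝ (A : Set E), f y ≤ 1 := fun y hy =>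
    convexHull_min hfS.1 (convex_halfSpace_le f.isLinear 1) hy
  exact ⟨_, isExposed_setOf_eq_of_le (f := LinearMap.toContinuousLinearMap f) hfP, ⟨hx, hfS.2⟩,
    hdim⟩

end Polytopes

theorem exists_mem_convexHull_of_cartier {n : ℕ} {ι : Type*} [Fintype ι]
    {T : Set (Fin n → ℝ)} {I : ι → Set (Fin n → ℝ)} (hI : Pairwise (Disjoint on I))
    (hT : T ⊆ ⋃ i, I i) {m : ι → Fin n → ℤ}
    (hm : ∀ i, ∀ v ∈ T,
      (v ∈ I i → ∑ k, (m i k : ℝ) * v k = -1) ∧ (v ∉ I i → ∑ k, (m i k : ℝ) * v k = 0))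
    {x : Fin n → ℝ} (hx : x ∈ convexHull ℝ T) (hxL : IsLatticePoint x) :
    ∃ i, x ∈ convexHull ℝ (I i) := by
  let φ : ι → Module.Dual ℝ (Fin n → ℝ) := fun i => -∑ k, (m i k : ℝ) • LinearMap.proj k
  have hφ : ∀ i y, φ i y = -∑ k, (m i k : ℝ) * y k := fun i y => by simp [φ]
  have hφT : ∀ i, ∀ v ∈ T, φ i v = (I i).indicator 1 v := fun i v hv => by
    by_cases hvi : v ∈ I i
    · simp [hφ, (hm i v hv).1 hvi, hvi]
    · simp [hφ, (hm i v hv).2 hvi, hvi]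
  obtain ⟨i, hi⟩ := exists_mem_convexHull_setOf_eq_one (φ := φ)
    (fun i v hv => by rw [hφT i v hv]; by_cases hvi : v ∈ I i <;> simp [hvi])
    (fun v hv => by simp_rw [hφT _ v hv]; exact sum_indicator_one_eq_one hI (hT hv)) hx
    (fun i => let ⟨z, hz⟩ := hxL.exists_int_sum_mul (m i); ⟨-z, by simp [hφ, hz]⟩)
  refine ⟨i, convexHull_mono (fun v hv => ?_) hi⟩
  by_contra hvi
  simpa [hφT i v hv.1, hvi] using hv.2

theorem stmt2_general (n r : ℕ) (hr : 1 ≤ r)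
    (A : Finset (Fin n → ℝ))
    (P : Set (Fin n → ℝ)) (hPdef : P = convexHull ℝ (A : Set (Fin n → ℝ)))
    (h0 : (0 : Fin n → ℝ) ∈ interior P)
    (I : Fin r → Set (Fin n → ℝ))
    (hIdisj : ∀ i j : Fin r, i ≠ j → Disjoint (I i) (I j))
    (hIunion : (⋃ i, I i) = Set.extremePoints ℝ P)
    -- (ii) Cartier data of the nef-partition on every facet
    (hcartier : ∀ F : Set (Fin n → ℝ), IsExposed ℝ P F →
      Module.finrank ℝ (vectorSpan ℝ F) = n - 1 → ∀ i : Fin r,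
      ∃ m : Fin n → ℤ, ∀ v ∈ Set.extremePoints ℝ F,
        (v ∈ I i → ∑ k, (m k : ℝ) * v k = -1) ∧ (v ∉ I i → ∑ k, (m k : ℝ) * v k = 0))
    -- `0` is the only lattice point interior to `P`
    (honlyint : ∀ x ∈ interior P, IsLatticePoint x → x = 0) :
    ({x ∈ P | IsLatticePoint x}
        = ⋃ i : Fin r, {x ∈ convexHull ℝ (I i ∪ {0}) | IsLatticePoint x})
      ∧ ∀ i : Fin r, convexHull ℝ (I i ∪ {0}) ⊆ P := by
  subst hPdef
  have hsub : ∀ i, convexHull ℝ (I i ∪ {0}) ⊆ convexHull ℝ (A : Set (Fin n → ℝ)) := fun i =>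
    convexHull_min
      (union_subset (fun v hv => extremePoints_subset (hIunion ▸ mem_iUnion_of_mem i hv))
        (singleton_subset_iff.2 (interior_subset h0))) (convex_convexHull ℝ _)
  refine ⟨subset_antisymm (fun x ⟨hxP, hxL⟩ => mem_iUnion.2 ?_)
    (iUnion_subset fun i x hx => ⟨hsub i hx.1, hx.2⟩), hsub⟩
  by_cases hxi : x ∈ interior (convexHull ℝ (A : Set (Fin n → ℝ)))
  · exact ⟨⟨0, hr⟩, subset_convexHull ℝ _ (Or.inr (honlyint x hxi hxL)), hxL⟩
  obtain ⟨F, hF, hxF, hdim⟩ := exists_facet_of_notMem_interior h0 hxP hxi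
  rw [Module.finrank_fin_fun] at hdim
  choose m hm using hcartier F hF hdim
  obtain ⟨i, hi⟩ := exists_mem_convexHull_of_cartier hIdisj
    (hIunion ▸ hF.isExtreme.extremePoints_subset_extremePoints) hm
    (hF.convexHull_extremePoints_eq.symm ▸ hxF) hxL
  exact ⟨i, convexHull_mono subset_union_left hi, hxL⟩

/-- for a reflexive polytope `P` with nef-partition `I_1 ⊔ ⋯ ⊔ I_r` of its
vertex set, whose only interior lattice point is `0`, every lattice point of `P` lies in
some `∇_i = conv(I_i ∪ {0})`, and conversely each `∇_i` is contained in `P`. -/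
theorem stmt2 (n r : ℕ) (hn : 1 ≤ n) (hr : 1 ≤ r)
    (A : Finset (Fin n → ℝ))
    (P : Set (Fin n → ℝ)) (hPdef : P = convexHull ℝ (A : Set (Fin n → ℝ)))
    (h0 : (0 : Fin n → ℝ) ∈ interior P)
    (hvertLat : ∀ v ∈ Set.extremePoints ℝ P, IsLatticePoint v)
    (I : Fin r → Set (Fin n → ℝ))
    (hIdisj : ∀ i j : Fin r, i ≠ j → Disjoint (I i) (I j))
    (hIunion : (⋃ i, I i) = Set.extremePoints ℝ P)
    -- (i) reflexivity: every facet lies on an integral hyperplane at level -1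
    (hreflexive : ∀ F : Set (Fin n → ℝ), IsExposed ℝ P F →
      Module.finrank ℝ (vectorSpan ℝ F) = n - 1 →
      ∃ m : Fin n → ℤ, ∀ x ∈ F, ∑ k, (m k : ℝ) * x k = -1)
    -- (ii) Cartier data of the nef-partition on every facet
    (hcartier : ∀ F : Set (Fin n → ℝ), IsExposed ℝ P F →
      Module.finrank ℝ (vectorSpan ℝ F) = n - 1 → ∀ i : Fin r,
      ∃ m : Fin n → ℤ, ∀ v ∈ Set.extremePoints ℝ F,
        (v ∈ I i → ∑ k, (m k : ℝ) * v k = -1) ∧ (v ∉ I i → ∑ k, (m k : ℝ) * v k = 0))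
    -- `0` is the only lattice point interior to `P`
    (honlyint : ∀ x ∈ interior P, IsLatticePoint x → x = 0) :
    ({x ∈ P | IsLatticePoint x}
        = ⋃ i : Fin r, {x ∈ convexHull ℝ (I i ∪ {0}) | IsLatticePoint x})
      ∧ ∀ i : Fin r, convexHull ℝ (I i ∪ {0}) ⊆ P :=
  stmt2_general n r hr A P hPdef h0 I hIdisj hIunion hcartier honlyint
end
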